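/- arXiv:2405.03669 — 7 statements merged into one kernel-verified Lean document; each statement's English description precedes it below -/
import Mathlib

section
/- If a binary relation → is diamond (in the Dal Lago–Martini sense), then it is length-invariant: any two reduction sequences from the same term t to the same →-normal term s have the same length. That is, if t →^k s and t →^h s with s in →-normal form, then k = h. -/
/-- Dal Lago–Martini diamond property. -/
def Diamond {A : Type*} (r : A → A → Prop) : Prop :=
  ∀ t s₁ s₂, r t s₁ → r t s₂ → s₁ ≠ s₂ → ∃ u, r s₁ u ∧ r s₂ u

/-- `ReducesIn r k t s`: there is a reduction sequence of length exactly `k`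
from `t` to `s`. -/
inductive ReducesIn {A : Type*} (r : A → A → Prop) : ℕ → A → A → Prop
  | refl (t : A) : ReducesIn r 0 t t
  | step {t u s : A} {n : ℕ} : r t u → ReducesIn r n u s → ReducesIn r (n + 1) t s


lemma diamond_descent {A : Type*} {r : A → A → Prop} (h : Diamond r) :
    ∀ {n : ℕ} {a s : A}, ReducesIn r n a s → (∀ s', ¬ r s s') →
      ∀ {b : A}, r a b → ∃ m, n = m + 1 ∧ ReducesIn r m b s := by
  intro n
  induction n using Nat.strong_induction_on with
  | _ n ih =>
    intro a s hred hnorm b hab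
    cases hred with
    | refl => exact absurd hab (hnorm b)
    | @step _ c _ m hac hcs =>
      by_cases hbc : b = c
      · exact ⟨m, rfl, hbc ▸ hcs⟩
      · obtain ⟨d, hbd, hcd⟩ := h a b c hab hac hbc
        obtain ⟨m', hm', hds⟩ := ih m (Nat.lt_succ_self m) hcs hnorm hcd
        exact ⟨m' + 1, by omega, ReducesIn.step hbd hds⟩

theorem diamond_length_invariance {A : Type*} (r : A → A → Prop) (h : Diamond r)
    (t s : A) (hnorm : ∀ s', ¬ r s s') (k h' : ℕ)
    (h₁ : ReducesIn r k t s) (h₂ : ReducesIn r h' t s) : k = h' := by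
  induction k generalizing t h' with
  | zero =>
    cases h₁
    cases h₂ with
    | refl => rfl
    | step hstep _ => exact absurd hstep (hnorm _)
  | succ n ih =>
    cases h₁ with
    | step htu hus =>
      obtain ⟨m, hm, hms⟩ := diamond_descent h h₂ hnorm htu
      rw [hm, ih _ _ hus hms]
end

section
/- If a binary relation → is diamond (in the Dal Lago–Martini sense), then it is uniformly normalizing: a term t is weakly →-normalizing (reduces in finitely many steps to some normal form) if and only if t is strongly →-normalizing (there is no infinite →-sequence starting from t). -/
/-- `t` is weakly normalizing: it reduces to some normal form. -/
def WeaklyNormalizing {A : Type*} (r : A → A → Prop) (t : A) : Prop :=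
  ∃ s, Relation.ReflTransGen r t s ∧ ∀ s', ¬ r s s'

/-- `t` is strongly normalizing: no infinite reduction sequence starts from `t`,
expressed via accessibility of `t` for the reversed relation. -/
def StronglyNormalizing {A : Type*} (r : A → A → Prop) (t : A) : Prop :=
  Acc (fun x y => r y x) t

/-- `n`-step reduction. -/
def RN {A : Type*} (r : A → A → Prop) : ℕ → A → A → Prop
  | 0, a, b => a = b
  | n + 1, a, b => ∃ c, r a c ∧ RN r n c b

lemma RN.tail {A : Type*} {r : A → A → Prop} :
    ∀ {n a b c}, RN r n a b → r b c → RN r (n + 1) a c := by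
  intro n
  induction n with
  | zero => intro a b c hab hbc; cases hab; exact ⟨c, hbc, rfl⟩
  | succ n ih =>
    rintro a b c ⟨d, had, hdb⟩ hbc
    exact ⟨d, had, ih hdb hbc⟩

lemma rtg_to_RN {A : Type*} {r : A → A → Prop} {a b : A}
    (h : Relation.ReflTransGen r a b) : ∃ n, RN r n a b := by
  induction h with
  | refl => exact ⟨0, rfl⟩
  | tail _ hbc ih => obtain ⟨n, hn⟩ := ih; exact ⟨n + 1, hn.tail hbc⟩

/-- Strip lemma: with diamond, every one-step reduct is one step closer
to the normal form. -/
lemma strip {A : Type*} {r : A → A → Prop} (h : Diamond r) {s : A}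
    (hs : ∀ s', ¬ r s s') :
    ∀ n {x y}, RN r n x s → r x y → ∃ m, m + 1 = n ∧ RN r m y s := by
  intro n
  induction n with
  | zero =>
    intro x y hx hxy; cases hx; exact absurd hxy (hs y)
  | succ n ih =>
    rintro x y ⟨x₁, hxx₁, hx₁s⟩ hxy
    by_cases hyx₁ : y = x₁
    · exact ⟨n, rfl, hyx₁ ▸ hx₁s⟩
    · obtain ⟨u, hx₁u, hyu⟩ := h x x₁ y hxx₁ hxy (Ne.symm hyx₁)
      obtain ⟨m, hm, hus⟩ := ih hx₁s hx₁u
      cases hm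
      exact ⟨m + 1, rfl, ⟨u, hyu, hus⟩⟩

theorem diamond_uniform_normalization {A : Type*} (r : A → A → Prop) (h : Diamond r)
    (t : A) : WeaklyNormalizing r t ↔ StronglyNormalizing r t := by
  constructor
  · rintro ⟨s, hts, hs⟩
    obtain ⟨n, hn⟩ := rtg_to_RN hts
    clear hts
    induction n using Nat.strong_induction_on generalizing t with
    | _ n ih =>
      refine Acc.intro t fun y hty => ?_
      obtain ⟨m, hm, hys⟩ := strip h hs n hn hty
      exact ih m (hm ▸ Nat.lt_succ_self m) y hys
  · intro hsn
    induction hsn with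
    | intro x _ ih =>
      by_cases hx : ∃ y, r x y
      · obtain ⟨y, hxy⟩ := hx
        obtain ⟨s, hys, hs⟩ := ih y hxy
        exact ⟨s, Relation.ReflTransGen.head hxy hys, hs⟩
      · exact ⟨x, Relation.ReflTransGen.refl, fun y hy => hx ⟨y, hy⟩⟩
end

section
/- Abstract one-step transfer lemma: in a lax implementation system consisting of a machine with transitions partitioned into principal transitions ⇒p and search transitions ⇒s, a decoding function ⟦·⟧ from states to terms, and a strategy →str, such that (i) ⇒s-steps preserve the decoding, (ii) ⇒p-steps project to →str-steps of the decoding, (iii) ⇒s terminates, and (iv) final states decode to →str-normal terms, then: for every reachable state Q, if ⟦Q⟧ →str s for some s, then there exists a state Q' with Q ⇒s* ⇒p Q'. -/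
/-- Abstract one-step transfer lemma for lax implementation systems.
`p` are the principal transitions, `se` the search transitions, `rstr`
the strategy on terms, `decode` the read-back of states. -/
theorem one_step_transfer {S T : Type*}
    (p se : S → S → Prop) (rstr : T → T → Prop) (decode : S → T)
    (transparency : ∀ Q Q', se Q Q' → decode Q = decode Q')
    (projection : ∀ Q Q', p Q Q' → rstr (decode Q) (decode Q'))
    (seaTerminates : WellFounded (fun Q' Q => se Q Q'))
    (halt : ∀ Q : S, (∀ Q', ¬ p Q Q') → (∀ Q', ¬ se Q Q') →
      ∀ s, ¬ rstr (decode Q) s) :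
    ∀ Q : S, (∃ s, rstr (decode Q) s) →
      ∃ Q'' Q', Relation.ReflTransGen se Q Q'' ∧ p Q'' Q' := by
  intro Q
  induction Q using seaTerminates.induction with
  | _ Q ih =>
    intro ⟨s, hs⟩
    by_cases hp : ∃ Q', p Q Q'
    · obtain ⟨Q', hQ'⟩ := hp
      exact ⟨Q, Q', Relation.ReflTransGen.refl, hQ'⟩
    · by_cases hse : ∃ Q1, se Q Q1
      · obtain ⟨Q1, hQ1⟩ := hse
        obtain ⟨Q'', Q', hr, hp'⟩ := ih Q1 hQ1 ⟨s, (transparency Q Q1 hQ1 ▸ hs)⟩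
        exact ⟨Q'', Q', Relation.ReflTransGen.head hQ1 hr, hp'⟩
      · exact absurd hs (halt Q (fun Q' h => hp ⟨Q', h⟩) (fun Q' h => hse ⟨Q', h⟩) s)
end

section
/- Abstract big-step implementation theorem (runs to evaluations): in a lax implementation system, for every run Q₀ ⇒* Q from an initial state Q₀ with ⟦Q₀⟧ = t, there exists a →str-evaluation t →str* ⟦Q⟧ whose length equals the number of principal transitions in the run. -/
/-- `RunN p se n Q Q'`: a machine run from `Q` to `Q'` (transitions `⇒ = p ∪ se`)
containing exactly `n` principal (`p`) transitions. -/
inductive RunN {S : Type*} (p se : S → S → Prop) : ℕ → S → S → Prop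
  | refl (Q : S) : RunN p se 0 Q Q
  | prin {Q Q' Q'' : S} {n : ℕ} : p Q Q' → RunN p se n Q' Q'' → RunN p se (n + 1) Q Q''
  | sea {Q Q' Q'' : S} {n : ℕ} : se Q Q' → RunN p se n Q' Q'' → RunN p se n Q Q''

theorem RunN.reducesIn_map {S T : Type*} {p se : S → S → Prop} {r : T → T → Prop} (f : S → T)
    (map_prin : ∀ Q Q', p Q Q' → r (f Q) (f Q')) (map_sea : ∀ Q Q', se Q Q' → f Q = f Q')
    {n : ℕ} {Q Q' : S} (run : RunN p se n Q Q') : ReducesIn r n (f Q) (f Q') := by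
  induction run with
  | refl Q => exact .refl _
  | prin h _ ih => exact .step (map_prin _ _ h) ih
  | sea h _ ih => exact map_sea _ _ h ▸ ih

theorem runs_to_evaluations_general {S T : Type*}
    (p se : S → S → Prop) (rstr : T → T → Prop) (decode : S → T)
    (projection : ∀ Q Q', p Q Q' → rstr (decode Q) (decode Q'))
    (transparency : ∀ Q Q', se Q Q' → decode Q = decode Q') :
    ∀ (Q₀ Q : S) (t : T) (n : ℕ), decode Q₀ = t → RunN p se n Q₀ Q →
      ReducesIn rstr n t (decode Q) := by
  rintro Q₀ Q _ n rfl run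
  exact run.reducesIn_map decode projection transparency

/-- Runs to evaluations: in a lax implementation system, every run of `n`
principal transitions from an initial state decoding to `t` projects to a
strategy evaluation of length `n` from `t` to the decoding of the end state. -/
theorem runs_to_evaluations {S T : Type*}
    (p se : S → S → Prop) (rstr : T → T → Prop) (decode : S → T)
    (projection : ∀ Q Q', p Q Q' → rstr (decode Q) (decode Q'))
    (transparency : ∀ Q Q', se Q Q' → decode Q = decode Q')
    (seaTerminates : WellFounded (fun Q' Q => se Q Q'))
    (halt : ∀ Q : S, (∀ Q', ¬ p Q Q') → (∀ Q', ¬ se Q Q') →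
      ∀ s, ¬ rstr (decode Q) s)
    (diamond : Diamond rstr) :
    ∀ (Q₀ Q : S) (t : T) (n : ℕ), decode Q₀ = t → RunN p se n Q₀ Q →
      ReducesIn rstr n t (decode Q) :=
  runs_to_evaluations_general p se rstr decode projection transparency
end

section
/- Abstract big-step implementation theorem (evaluations to runs): in a lax implementation system, if ⟦Q₀⟧ →str^k s with s →str-normal, then there is a machine run from Q₀ to a final state Q with ⟦Q⟧ = s, containing exactly k principal transitions. -/
/-- Stripping lemma: with the diamond property, if `t` reduces to a normal
form `s` in `n` steps and `r t u`, then `n = m + 1` and `u` reduces to `s`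
in `m` steps. -/
lemma diamond_strip {A : Type*} {r : A → A → Prop} (diamond : Diamond r) :
    ∀ n (t u s : A), r t u → ReducesIn r n t s → (∀ s', ¬ r s s') →
      ∃ m, n = m + 1 ∧ ReducesIn r m u s := by
  intro n
  induction n using Nat.strong_induction_on with
  | _ n ih =>
    intro t u s htu hred hnorm
    cases hred with
    | refl => exact absurd htu (hnorm u)
    | @step _ v _ m htv hvs =>
      by_cases huv : u = v
      · exact ⟨m, rfl, huv ▸ hvs⟩
      · obtain ⟨w, huw, hvw⟩ := diamond t u v htu htv huv
        obtain ⟨m', hm', hw⟩ := ih m (Nat.lt_succ_self m) v w s hvw hvs hnorm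
        exact ⟨m' + 1, by omega, ReducesIn.step huw hw⟩

/-- Normalizing evaluations to runs: in a lax implementation system, if
`⟦Q₀⟧ →str^k s` with `s` normal for the strategy, then there is a machine run
from `Q₀` to a final state decoding to `s`, with exactly `k` principal transitions. -/
theorem evaluations_to_runs {S T : Type*}
    (p se : S → S → Prop) (rstr : T → T → Prop) (decode : S → T)
    (projection : ∀ Q Q', p Q Q' → rstr (decode Q) (decode Q'))
    (transparency : ∀ Q Q', se Q Q' → decode Q = decode Q')
    (seaTerminates : WellFounded (fun Q' Q => se Q Q'))
    (halt : ∀ Q : S, (∀ Q', ¬ p Q Q') → (∀ Q', ¬ se Q Q') →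
      ∀ s, ¬ rstr (decode Q) s)
    (diamond : Diamond rstr) :
    ∀ (Q₀ : S) (s : T) (k : ℕ), ReducesIn rstr k (decode Q₀) s →
      (∀ s', ¬ rstr s s') →
      ∃ Q : S, RunN p se k Q₀ Q ∧ decode Q = s ∧
        (∀ Q', ¬ p Q Q') ∧ (∀ Q', ¬ se Q Q') := by
  have main : ∀ (k : ℕ) (Q₀ : S) (s : T), ReducesIn rstr k (decode Q₀) s →
      (∀ s', ¬ rstr s s') →
      ∃ Q : S, RunN p se k Q₀ Q ∧ decode Q = s ∧
        (∀ Q', ¬ p Q Q') ∧ (∀ Q', ¬ se Q Q') := by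
    intro k
    induction k using Nat.strong_induction_on with
    | _ k ihk =>
      intro Q₀
      induction Q₀ using seaTerminates.induction with
      | _ Q₀ ihse =>
        intro s hred hnorm
        by_cases hse : ∃ Q', se Q₀ Q'
        · obtain ⟨Q', hseQ⟩ := hse
          have hdec := transparency Q₀ Q' hseQ
          obtain ⟨Q, hrun, h⟩ := ihse Q' hseQ s (hdec ▸ hred) hnorm
          exact ⟨Q, RunN.sea hseQ hrun, h⟩
        · push_neg at hse
          by_cases hp : ∃ Q', p Q₀ Q'
          · obtain ⟨Q', hpQ⟩ := hp
            have hr := projection Q₀ Q' hpQ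
            obtain ⟨m, hk, hred'⟩ := diamond_strip diamond k _ _ s hr hred hnorm
            obtain ⟨Q, hrun, h⟩ := ihk m (by omega) Q' s hred' hnorm
            exact ⟨Q, hk ▸ RunN.prin hpQ hrun, h⟩
          · push_neg at hp
            have hno := halt Q₀ hp hse
            cases hred with
            | refl => exact ⟨Q₀, RunN.refl Q₀, rfl, hp, hse⟩
            | step h _ => exact absurd h (hno _)
  exact fun Q₀ s k h hn => main k Q₀ s h hn
end

section
/- Abstract big-step implementation theorem (divergence transfer): in a lax implementation system where ⇒ is deterministic, if the strategy →str has an infinite reduction sequence from ⟦Q₀⟧, then the machine has an infinite run from Q₀ containing infinitely many principal transitions. -/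
/-!
Run the machine while keeping the invariant that the decoding of the current state diverges.
Such a state cannot be final (halt property), so it has a successor; a search step leaves the
decoding unchanged, and a principal step projects to a strategy step, after which the decoding
still diverges because the diamond property makes divergence stable under reduction. Termination
of search steps then rules out a tail of the run consisting of search steps only.
-/

def Diverges {A : Type*} (r : A → A → Prop) (t : A) : Prop :=
  ∃ f : ℕ → A, f 0 = t ∧ ∀ n, r (f n) (f (n + 1))

theorem exists_seq_of_forall_exists_rel {A : Type*} {r : A → A → Prop} {P : ℕ → A → Prop}
    (step : ∀ n x, P n x → ∃ y, r x y ∧ P (n + 1) y) {a : A} (ha : P 0 a) :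
    ∃ g : ℕ → A, g 0 = a ∧ ∀ n, r (g n) (g (n + 1)) ∧ P n (g n) := by
  choose next hnext_rel hnext_P using step
  let G : ∀ n, {x : A // P n x} :=
    fun n => Nat.rec ⟨a, ha⟩ (fun k x => ⟨next k x.1 x.2, hnext_P k x.1 x.2⟩) n
  exact ⟨fun n => (G n).1, rfl, fun n => ⟨hnext_rel n (G n).1 (G n).2, (G n).2⟩⟩

theorem Diamond.diverges_of_rel {A : Type*} {r : A → A → Prop} (dia : Diamond r)
    {t s : A} (ht : Diverges r t) (hts : r t s) : Diverges r s := by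
  obtain ⟨f, rfl, hf⟩ := ht
  -- The `n`-th term of the new sequence is either `f (n + 1)` or a one-step reduct of `f n`;
  -- in the second case the diamond closes the square with `f (n + 1)`.
  have step : ∀ n x, (r (f n) x ∨ x = f (n + 1)) →
      ∃ y, r x y ∧ (r (f (n + 1)) y ∨ y = f (n + 2)) := by
    intro n x hx
    by_cases hxf : x = f (n + 1)
    · exact ⟨f (n + 2), hxf ▸ hf (n + 1), Or.inr rfl⟩
    · obtain ⟨u, hxu, hfu⟩ := dia (f n) x (f (n + 1)) (hx.resolve_right hxf) (hf n) hxf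
      exact ⟨u, hxu, Or.inl hfu⟩
  obtain ⟨g, hg0, hg⟩ := exists_seq_of_forall_exists_rel step (Or.inl hts)
  exact ⟨g, hg0, fun n => (hg n).1⟩

theorem exists_le_rel_of_forall_or_of_wellFounded {A : Type*} {p se : A → A → Prop}
    (hwf : WellFounded (fun b a => se a b)) {g : ℕ → A}
    (hg : ∀ n, p (g n) (g (n + 1)) ∨ se (g n) (g (n + 1))) (n : ℕ) :
    ∃ m, n ≤ m ∧ p (g m) (g (m + 1)) := by
  by_contra! hp
  have hse : ∀ k, se (g (n + k)) (g (n + k + 1)) :=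
    fun k => (hg (n + k)).resolve_left (hp (n + k) (Nat.le_add_right n k))
  exact (wellFounded_iff_isEmpty_descending_chain.1 hwf).false ⟨fun k => g (n + k), hse⟩

theorem divergence_transfer_general {S T : Type*}
    (p se : S → S → Prop) (rstr : T → T → Prop) (decode : S → T)
    (projection : ∀ Q Q', p Q Q' → rstr (decode Q) (decode Q'))
    (transparency : ∀ Q Q', se Q Q' → decode Q = decode Q')
    (seaTerminates : WellFounded (fun Q' Q => se Q Q'))
    (halt : ∀ Q : S, (∀ Q', ¬ p Q Q') → (∀ Q', ¬ se Q Q') →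
      ∀ s, ¬ rstr (decode Q) s)
    (diamond : Diamond rstr)
    (Q₀ : S) (f : ℕ → T) (hf0 : f 0 = decode Q₀)
    (hf : ∀ n, rstr (f n) (f (n + 1))) :
    ∃ g : ℕ → S, g 0 = Q₀ ∧
      (∀ n, p (g n) (g (n + 1)) ∨ se (g n) (g (n + 1))) ∧
      (∀ n, ∃ m, n ≤ m ∧ p (g m) (g (m + 1))) := by
  have step : ∀ (_ : ℕ) Q, Diverges rstr (decode Q) →
      ∃ Q', (p Q Q' ∨ se Q Q') ∧ Diverges rstr (decode Q') := by
    rintro - Q hQ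
    by_cases hp : ∃ Q', p Q Q'
    · obtain ⟨Q', hQQ'⟩ := hp
      exact ⟨Q', Or.inl hQQ', diamond.diverges_of_rel hQ (projection Q Q' hQQ')⟩
    have hse : ∃ Q', se Q Q' := by
      by_contra! hse
      obtain ⟨h, h0, hh⟩ := hQ
      exact halt Q (not_exists.1 hp) hse (h 1) (h0 ▸ hh 0)
    obtain ⟨Q', hQQ'⟩ := hse
    exact ⟨Q', Or.inr hQQ', transparency Q Q' hQQ' ▸ hQ⟩
  obtain ⟨g, hg0, hg⟩ := exists_seq_of_forall_exists_rel step ⟨f, hf0, hf⟩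
  have hrun : ∀ n, p (g n) (g (n + 1)) ∨ se (g n) (g (n + 1)) := fun n => (hg n).1
  exact ⟨g, hg0, hrun, exists_le_rel_of_forall_or_of_wellFounded seaTerminates hrun⟩

/-- Divergence transfer: in a lax implementation system with deterministic
machine transitions, if the strategy has an infinite reduction from `⟦Q₀⟧`,
then the machine has an infinite run from `Q₀` with infinitely many
principal transitions. -/
theorem divergence_transfer {S T : Type*}
    (p se : S → S → Prop) (rstr : T → T → Prop) (decode : S → T)
    (projection : ∀ Q Q', p Q Q' → rstr (decode Q) (decode Q'))
    (transparency : ∀ Q Q', se Q Q' → decode Q = decode Q')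
    (seaTerminates : WellFounded (fun Q' Q => se Q Q'))
    (halt : ∀ Q : S, (∀ Q', ¬ p Q Q') → (∀ Q', ¬ se Q Q') →
      ∀ s, ¬ rstr (decode Q) s)
    (diamond : Diamond rstr)
    (det : ∀ Q Q₁ Q₂ : S, (p Q Q₁ ∨ se Q Q₁) → (p Q Q₂ ∨ se Q Q₂) → Q₁ = Q₂)
    (Q₀ : S) (f : ℕ → T) (hf0 : f 0 = decode Q₀)
    (hf : ∀ n, rstr (f n) (f (n + 1))) :
    ∃ g : ℕ → S, g 0 = Q₀ ∧
      (∀ n, p (g n) (g (n + 1)) ∨ se (g n) (g (n + 1))) ∧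
      (∀ n, ∃ m, n ≤ m ∧ p (g m) (g (m + 1))) :=
  divergence_transfer_general p se rstr decode projection transparency seaTerminates halt diamond Q₀
    f hf0 hf
end

section
/- Search transitions are bilinearly bounded: let a machine run consist of transitions each of which either strictly decreases a natural-number measure μ on states (search transitions) or increases μ by at most a fixed bound B (principal transitions), where B ≥ μ of the initial state. Then the number of search transitions in the run is at most B · (p + 1), where p is the number of principal transitions. -/
/-! The potential `μ Qᵢ + #(search steps before i)` grows by at most `B` on a principal step and
does not grow on a search step, so it ends below `μ Q₀ + B p ≤ B (p + 1)`. -/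

theorem add_count_not_le_add_mul_count {m : ℕ → ℕ} {p : ℕ → Prop} [DecidablePred p]
    {n B : ℕ} (hprin : ∀ i < n, p i → m (i + 1) ≤ m i + B)
    (hsea : ∀ i < n, ¬p i → m (i + 1) < m i) :
    m n + Nat.count (fun i => ¬p i) n ≤ m 0 + B * Nat.count p n := by
  induction n with
  | zero => simp
  | succ n ih =>
    have ih := ih (fun i hi => hprin i (by omega)) (fun i hi => hsea i (by omega))
    rw [Nat.count_succ, Nat.count_succ]
    by_cases hn : p n
    · have := hprin n (by omega) hn
      simp only [hn, not_true_eq_false, if_true, if_false]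
      rw [Nat.mul_succ]
      omega
    · have := hsea n (by omega) hn
      simp only [hn, not_false_eq_true, if_true, if_false, add_zero]
      omega

/-- Search transitions are bilinearly bounded: in a run `Q₀, …, Qₙ` where each
step is either a search step (strictly decreasing the measure `μ`) or a
principal step (increasing `μ` by at most `B`), with `μ Q₀ ≤ B`, the number of
search steps is at most `B * (p + 1)` where `p` is the number of principal steps. -/
theorem search_bilinear {St : Type*} (Q : ℕ → St) (μ : St → ℕ) (lab : ℕ → Bool)
    (n B : ℕ) (h0 : μ (Q 0) ≤ B)
    (hprin : ∀ i < n, lab i = true → μ (Q (i + 1)) ≤ μ (Q i) + B)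
    (hsea : ∀ i < n, lab i = false → μ (Q (i + 1)) < μ (Q i)) :
    ((Finset.range n).filter (fun i => lab i = false)).card ≤
      B * (((Finset.range n).filter (fun i => lab i = true)).card + 1) := by
  have key := add_count_not_le_add_mul_count (m := μ ∘ Q) (p := fun i => lab i = true)
    hprin (fun i hi h => hsea i hi (by simpa using h))
  simp only [Function.comp_apply, Bool.not_eq_true, Nat.count_eq_card_filter_range] at key
  rw [Nat.mul_succ]
  omega
end
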